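/- For a finite simple graph G with nonempty vertex set V, the largest H-eigenvalue λ_max^L(G^{k,k/2}) of the Laplacian tensor L(G^{k,k/2}) (the supremum of the set of H-eigenvalues of L(G^{k,k/2})) equals the largest eigenvalue of the Laplacian matrix L(G) = D(G) − A(G) of G, where A(G) is the adjacency matrix of G and D(G) the diagonal matrix of degrees. -/

import Mathlib

/-!
Let `y` be an eigenvector of `L(G) = D(G) − A(G)` for its largest eigenvalue `c`. Splitting each
`y u` into `s` real factors of equal absolute value, one of them carrying the sign, gives a real
eigenvector of `L(G^{k,k/2})` for the same `c`, because the product over a half edge recovers `y`.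
Conversely, multiplying the tensor equation at `(u, v)` by `x (u, v)` shows that
`(deg u − λ) x (u, v)^k` does not depend on `v`. So either `λ = deg u` for some `u`, a diagonal
entry of `L(G)`, or for each `u` the `x (u, v)^2` agree and the half-edge products
`y u = ∏ q, x (u, q)` satisfy `yᵀ L(G) y = λ yᵀ y`. In both cases the Rayleigh bound
`zᵀ L(G) z ≤ c zᵀ z` gives `λ ≤ c`.
-/

open scoped BigOperators
open Matrix

/-- `lam` is an eigenvalue of the Laplacian tensor `L(G^{k,k/2})` of the generalized power
hypergraph `G^{k,k/2}` with eigenvector `x`. -/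
def IsLapEigenpair {V : Type*} [Fintype V] [DecidableEq V] (k s : ℕ)
    (G : SimpleGraph V) [DecidableRel G.Adj]
    (lam : ℂ) (x : V × Fin s → ℂ) : Prop :=
  x ≠ 0 ∧ ∀ (u : V) (v : Fin s),
    ((G.degree u : ℂ) - lam) * x (u, v) ^ (k - 1) =
      ∑ w ∈ G.neighborFinset u,
        (∏ p ∈ Finset.univ.erase v, x (u, p)) * ∏ q : Fin s, x (w, q)

open Finset

namespace Matrix.IsHermitian

variable {n : Type*} [Fintype n] [DecidableEq n] {A : Matrix n n ℝ}

theorem posSemidef_smul_one_sub (hA : A.IsHermitian) {c : ℝ}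
    (hc : ∀ i, hA.eigenvalues i ≤ c) : (c • 1 - A).PosSemidef := by
  set U : Matrix n n ℝ := (hA.eigenvectorUnitary : Matrix n n ℝ)
  have hU : U * star U = 1 := Unitary.mul_star_self_of_mem hA.eigenvectorUnitary.2
  have hconj : c • 1 - A = U * (c • 1 - diagonal hA.eigenvalues) * star U := by
    conv_lhs => rw [hA.spectral_theorem, Unitary.conjStarAlgAut_apply]
    rw [Matrix.mul_sub, Matrix.sub_mul, Matrix.mul_smul, mul_one, Matrix.smul_mul, hU]
    rfl
  rw [hconj, Unitary.isUnit_coe.posSemidef_star_right_conjugate_iff, smul_one_eq_diagonal,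
    diagonal_sub, posSemidef_diagonal_iff]
  exact fun i => sub_nonneg.2 (hc i)

theorem dotProduct_mulVec_le (hA : A.IsHermitian) {c : ℝ}
    (hc : ∀ i, hA.eigenvalues i ≤ c) (z : n → ℝ) : z ⬝ᵥ (A *ᵥ z) ≤ c * (z ⬝ᵥ z) := by
  have h := (hA.posSemidef_smul_one_sub hc).dotProduct_mulVec_nonneg z
  rw [sub_mulVec, smul_mulVec, one_mulVec, dotProduct_sub, dotProduct_smul, star_trivial,
    smul_eq_mul, sub_nonneg] at h
  exact h

theorem le_of_dotProduct_mulVec_eq (hA : A.IsHermitian) {c : ℝ}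
    (hc : ∀ i, hA.eigenvalues i ≤ c) {lam : ℝ} {y : n → ℝ} (hy : y ≠ 0)
    (h : y ⬝ᵥ (A *ᵥ y) = lam * (y ⬝ᵥ y)) : lam ≤ c := by
  have hpos : 0 < y ⬝ᵥ y :=
    lt_of_le_of_ne (by simpa using dotProduct_star_self_nonneg y)
      (Ne.symm (dotProduct_self_eq_zero.not.2 hy))
  exact le_of_mul_le_mul_right (h ▸ hA.dotProduct_mulVec_le hc y) hpos

theorem diag_le (hA : A.IsHermitian) {c : ℝ} (hc : ∀ i, hA.eigenvalues i ≤ c) (i : n) :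
    A i i ≤ c := by
  simpa [mulVec_single] using hA.dotProduct_mulVec_le hc (Pi.single i 1)

theorem isGreatest_eigenvalues [Nonempty n] (hA : A.IsHermitian) :
    IsGreatest {lam | ∃ y ≠ 0, A *ᵥ y = lam • y} (univ.sup' univ_nonempty hA.eigenvalues) := by
  refine ⟨?_, ?_⟩
  · obtain ⟨i, -, hi⟩ := exists_mem_eq_sup' univ_nonempty hA.eigenvalues
    refine ⟨hA.eigenvectorBasis i, fun h0 => hA.eigenvectorBasis.orthonormal.ne_zero i ?_, ?_⟩
    · exact congrArg (WithLp.toLp 2) h0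
    · rw [hi, hA.mulVec_eigenvectorBasis]
  · rintro lam ⟨y, hy, h⟩
    refine hA.le_of_dotProduct_mulVec_eq (fun i => le_sup' _ (mem_univ i)) hy ?_
    rw [h, dotProduct_smul, smul_eq_mul]

end Matrix.IsHermitian

theorem sq_prod_eq_of_pow_eq {ι : Type*} [Fintype ι] [Nonempty ι] {a : ι → ℝ} {c : ℝ}
    (ha : ∀ i, a i ^ (2 * Fintype.card ι) = c) : (∏ i, a i) ^ 2 = c := by
  obtain ⟨j⟩ := ‹Nonempty ι›
  have hsq : ∀ i, a i ^ 2 = a j ^ 2 := fun i =>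
    (pow_left_inj₀ (sq_nonneg _) (sq_nonneg _) Fintype.card_ne_zero).1 <| by
      rw [← pow_mul, ← pow_mul, ha, ha]
  rw [← prod_pow, prod_congr rfl fun i _ => hsq i, prod_const, card_univ, ← pow_mul, ha]

theorem pow_two_mul_card_sub_one_eq_prod_erase_mul_prod {ι : Type*} [Fintype ι]
    [DecidableEq ι] {a : ι → ℝ} (ha : ∀ i j, |a i| = |a j|) (v : ι) :
    a v ^ (2 * Fintype.card ι - 1) = (∏ p ∈ univ.erase v, a p) * ∏ p, a p := by
  have : Nonempty ι := ⟨v⟩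
  have hcard : 0 < Fintype.card ι := Fintype.card_pos
  by_cases hv : a v = 0
  · rw [hv, zero_pow (by omega), prod_eq_zero (mem_univ v) hv, mul_zero]
  refine mul_left_cancel₀ hv ?_
  rw [← pow_succ', Nat.sub_add_cancel (by omega), ← mul_assoc, mul_prod_erase _ _ (mem_univ v),
    ← sq, sq_prod_eq_of_pow_eq fun i => ?_]
  rw [← (even_two_mul _).pow_abs, ha, (even_two_mul _).pow_abs]

theorem exists_fin_abs_eq_and_prod_eq {n : ℕ} (hn : 0 < n) (t : ℝ) :
    ∃ a : Fin n → ℝ, (∀ i j, |a i| = |a j|) ∧ ∏ i, a i = t := by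
  obtain ⟨m, rfl⟩ : ∃ m, n = m + 1 := ⟨n - 1, by omega⟩
  set r := |t| ^ ((m + 1 : ℝ)⁻¹)
  have hr : 0 ≤ r := Real.rpow_nonneg (abs_nonneg t) _
  have hrpow : r ^ (m + 1) = |t| := by
    rw [← Real.rpow_natCast, ← Real.rpow_mul (abs_nonneg t), Nat.cast_succ,
      inv_mul_cancel₀ (by positivity), Real.rpow_one]
  have habs : ∀ i, |(Fin.cons (SignType.sign t * r) fun _ => r : Fin (m + 1) → ℝ) i| = r := by
    refine Fin.cases ?_ fun _ => abs_of_nonneg hr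
    rcases lt_trichotomy t 0 with ht | rfl | ht
    · simp [sign_neg ht, abs_of_nonneg hr]
    · simp [r, Real.zero_rpow (by positivity : (m + 1 : ℝ)⁻¹ ≠ 0)]
    · simp [sign_pos ht, abs_of_nonneg hr]
  refine ⟨_, fun i j => (habs i).trans (habs j).symm, ?_⟩
  rw [Fin.prod_univ_succ]
  simp [mul_assoc, ← pow_succ', hrpow]

section LapEigenpair

variable {V : Type*} [Fintype V] {G : SimpleGraph V} [DecidableRel G.Adj] {k s : ℕ} {lam : ℝ}

theorem isLapEigenpair_ofReal_iff [DecidableEq V] {x : V × Fin s → ℝ} :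
    IsLapEigenpair k s G lam (fun v => (x v : ℂ)) ↔ x ≠ 0 ∧ ∀ u v,
      ((G.degree u : ℝ) - lam) * x (u, v) ^ (k - 1) =
        ∑ w ∈ G.neighborFinset u, (∏ p ∈ univ.erase v, x (u, p)) * ∏ q, x (w, q) := by
  refine and_congr (not_congr ?_) (forall₂_congr fun u v => ?_)
  · simp [funext_iff]
  · rw [← Complex.ofReal_inj]
    push_cast
    exact Iff.rfl

theorem exists_isLapEigenpair_of_lapMatrix_mulVec_eq [DecidableEq V] (hks : k = 2 * s)
    (hs : 0 < s) {y : V → ℝ} (hy : y ≠ 0) (h : G.lapMatrix ℝ *ᵥ y = lam • y) :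
    ∃ x : V × Fin s → ℝ, IsLapEigenpair k s G lam (fun v => (x v : ℂ)) := by
  choose a habs hprod using fun u => exists_fin_abs_eq_and_prod_eq hs (y u)
  have hpow : ∀ u v, a u v ^ (k - 1) = (∏ p ∈ univ.erase v, a u p) * y u := fun u v => by
    simpa [hks, hprod] using pow_two_mul_card_sub_one_eq_prod_erase_mul_prod (habs u) v
  refine ⟨fun p => a p.1 p.2, isLapEigenpair_ofReal_iff.2 ⟨fun h0 => hy ?_, fun u v => ?_⟩⟩
  · ext u
    rw [← hprod u]
    exact prod_eq_zero (mem_univ ⟨0, hs⟩) (congrFun h0 (u, _))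
  · have hu := congrFun h u
    rw [G.lapMatrix_mulVec_apply, Pi.smul_apply, smul_eq_mul] at hu
    simp only [hpow, hprod, ← mul_sum]
    linear_combination (∏ p ∈ univ.erase v, a u p) * hu

theorem degree_sub_mul_pow_eq_prod_mul_sum (hk : 0 < k) {x : V × Fin s → ℝ} {u : V}
    {v : Fin s} (h : ((G.degree u : ℝ) - lam) * x (u, v) ^ (k - 1) =
        ∑ w ∈ G.neighborFinset u, (∏ p ∈ univ.erase v, x (u, p)) * ∏ q, x (w, q)) :
    ((G.degree u : ℝ) - lam) * x (u, v) ^ k =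
      (∏ q, x (u, q)) * ∑ w ∈ G.neighborFinset u, ∏ q, x (w, q) := by
  have hpow : x (u, v) ^ k = x (u, v) * x (u, v) ^ (k - 1) := by
    rw [← pow_succ', Nat.sub_add_cancel hk]
  rw [hpow, ← mul_prod_erase _ _ (mem_univ v), mul_assoc, mul_sum, ← h]
  ring

theorem degree_eq_or_exists_dotProduct_lapMatrix_mulVec_eq [DecidableEq V] (hks : k = 2 * s)
    (hs : 0 < s) {x : V × Fin s → ℝ} (hx : IsLapEigenpair k s G lam (fun v => (x v : ℂ))) :
    (∃ u, lam = G.degree u) ∨ ∃ y ≠ 0, y ⬝ᵥ (G.lapMatrix ℝ *ᵥ y) = lam * (y ⬝ᵥ y) := by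
  obtain ⟨hx0, hx⟩ := isLapEigenpair_ofReal_iff.1 hx
  refine or_iff_not_imp_left.2 fun hdeg => ?_
  push Not at hdeg
  have : NeZero s := ⟨hs.ne'⟩
  set y : V → ℝ := fun u => ∏ q, x (u, q)
  have key u v := degree_sub_mul_pow_eq_prod_mul_sum (by omega) (hx u v)
  have hsq : ∀ u v, y u ^ 2 = x (u, v) ^ k := fun u v =>
    sq_prod_eq_of_pow_eq fun v' => by
      rw [Fintype.card_fin, ← hks]
      exact mul_left_cancel₀ (sub_ne_zero.2 (hdeg u).symm) ((key u v').trans (key u v).symm)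
  refine ⟨y, fun hy0 => ?_, ?_⟩
  · obtain ⟨⟨u, v⟩, hxuv⟩ := Function.ne_iff.1 hx0
    have hyu := hsq u v
    rw [congrFun hy0 u] at hyu
    exact hxuv (pow_eq_zero_iff (by omega) |>.1 (hyu.symm.trans (by simp)))
  · have hterm : ∀ u, y u * ((G.lapMatrix ℝ *ᵥ y) u - lam * y u) = 0 := fun u => by
      rw [G.lapMatrix_mulVec_apply]
      linear_combination (G.degree u - lam) * hsq u 0 + key u 0
    rw [← sub_eq_zero, dotProduct, dotProduct, mul_sum, ← sum_sub_distrib]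
    exact sum_eq_zero fun u _ => by linear_combination hterm u

end LapEigenpair

/-- The largest `H`-eigenvalue of the Laplacian tensor `L(G^{k,k/2})` equals the largest
eigenvalue of the Laplacian matrix `L(G) = D(G) − A(G)` of the simple graph `G`. -/
theorem stmt9 {V : Type*} [Fintype V] [DecidableEq V] [Nonempty V] (k s : ℕ)
    (hk : 4 ≤ k) (hks : k = 2 * s) (G : SimpleGraph V) [DecidableRel G.Adj] :
    sSup {lam : ℝ | ∃ x : V × Fin s → ℝ,
        IsLapEigenpair k s G (lam : ℂ) (fun v => (x v : ℂ))} =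
      sSup {lam : ℝ | ∃ y : V → ℝ, y ≠ 0 ∧
        (Matrix.diagonal (fun u : V => (G.degree u : ℝ)) - G.adjMatrix ℝ) *ᵥ y
          = lam • y} := by
  have hs : 0 < s := by omega
  have hL := G.isHermitian_lapMatrix ℝ
  have hc : ∀ i, hL.eigenvalues i ≤ univ.sup' univ_nonempty hL.eigenvalues :=
    fun i => le_sup' _ (mem_univ i)
  have hmatrix := hL.isGreatest_eigenvalues
  have htensor : IsGreatest {lam : ℝ | ∃ x : V × Fin s → ℝ,
      IsLapEigenpair k s G (lam : ℂ) (fun v => (x v : ℂ))}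
      (univ.sup' univ_nonempty hL.eigenvalues) := by
    refine ⟨?_, ?_⟩
    · obtain ⟨y, hy, h⟩ := hmatrix.1
      exact exists_isLapEigenpair_of_lapMatrix_mulVec_eq hks hs hy h
    · rintro lam ⟨x, hx⟩
      rcases degree_eq_or_exists_dotProduct_lapMatrix_mulVec_eq hks hs hx with ⟨u, rfl⟩ | ⟨y, hy, h⟩
      · simpa [SimpleGraph.lapMatrix, SimpleGraph.degMatrix] using hL.diag_le hc u
      · exact hL.le_of_dotProduct_mulVec_eq hc hy h
  exact htensor.csSup_eq.trans hmatrix.csSup_eq.symm
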